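/- Let n = 15, 31, or 63 and let M, N be closed (n-1)-connected framed 2n-manifolds with Kervaire invariant Φ(M) = Φ(N) = 1, with rank H_n(M;ℤ) = 2 and rank H_n(N;ℤ) = 2s for some s ≥ 1. Assume the Kervaire invariant is additive under connected sum of framed manifolds, that framed manifolds of Kervaire invariant zero are framed-cobordant to homotopy spheres, and Kreck's theorem that two framed-cobordant closed (n-1)-connected framed 2n-manifolds of equal middle Betti number are diffeomorphic. Then (#_{i=1}^{s-1} S^n × S^n) # M is homeomorphic to N. -/
import Mathlib


/-!
STATEMENT 17: Let `n = 15, 31` or `63` and let `M, N` be closed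
`(n-1)`-connected framed `2n`-manifolds with Kervaire invariant
`Φ(M) = Φ(N) = 1`, with `rank H_n(M;ℤ) = 2` and `rank H_n(N;ℤ) = 2s`, `s ≥ 1`.
Assuming additivity of the Kervaire invariant under connected sum, that framed
manifolds of Kervaire invariant zero are framed-cobordant to homotopy spheres,
and Kreck's theorem (framed-cobordant closed `(n-1)`-connected framed
`2n`-manifolds of equal middle Betti number are diffeomorphic), the manifold
`(#_{i=1}^{s-1} S^n × S^n) # M` is homeomorphic to `N`.

`FMfd` abstracts closed `(n-1)`-connected framed `2n`-manifolds (including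
homotopy `2n`-spheres); `csum` is connected sum, `neg` orientation reversal,
`pow k` is the `k`-fold connected sum `#ᵏ (S^n × S^n)` with trivial framing
(`pow 0` the standard sphere), `betti` the middle Betti number, `FrCob` framed
cobordism, and `Φ` the Kervaire invariant.
-/
theorem stmt17
    (n : ℕ) (hn : n = 15 ∨ n = 31 ∨ n = 63)
    (FMfd : Type)
    (M N : FMfd) (s : ℕ) (hs : 1 ≤ s)
    (HtpySphere : FMfd → Prop)
    (csum : FMfd → FMfd → FMfd) (neg : FMfd → FMfd)
    (pow : ℕ → FMfd)                           -- #ᵏ (S^n × S^n), trivially framed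
    (Homeo Diffeo FrCob : FMfd → FMfd → Prop)
    (betti : FMfd → ℕ) (Φ : FMfd → ZMod 2)
    (hHomeoEquiv : Equivalence Homeo)
    (hDiffeoHomeo : ∀ a b, Diffeo a b → Homeo a b)
    -- the data of the statement
    (hΦM : Φ M = 1) (hΦN : Φ N = 1)
    (hbettiM : betti M = 2) (hbettiN : betti N = 2 * s)
    -- Kervaire invariant is additive under connected sum; trivially framed
    -- connected sums of copies of S^n × S^n have Kervaire invariant zero
    (hadd : ∀ a b, Φ (csum a b) = Φ a + Φ b)
    (hΦpow : ∀ k, Φ (pow k) = 0)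
    (hΦneg : ∀ a, Φ (neg a) = Φ a)
    -- Betti numbers under connected sum
    (hbettiadd : ∀ a b, betti (csum a b) = betti a + betti b)
    (hbettipow : ∀ k, betti (pow k) = 2 * k)
    (hbettisphere : ∀ S, HtpySphere S → betti S = 0)
    -- Kervaire invariant zero means framed-cobordant to a homotopy sphere
    (hcob : ∀ P, Φ P = 0 → ∃ S, HtpySphere S ∧ FrCob P S)
    -- moving a summand across a framed cobordism
    (hstep : ∀ P Q S, HtpySphere S → FrCob (csum P (neg Q)) S → FrCob P (csum Q S))
    -- Kreck: framed-cobordant manifolds of equal middle Betti number are diffeomorphic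
    (hKreck : ∀ P Q, FrCob P Q → betti P = betti Q → Diffeo P Q)
    -- connected sum with a homotopy sphere preserves the homeomorphism type
    (hsphereHomeo : ∀ Q S, HtpySphere S → Homeo (csum Q S) Q) :
    Homeo (csum (pow (s - 1)) M) N := by
  obtain ⟨S, hS, hF⟩ := hcob (csum (csum (pow (s - 1)) M) (neg N)) (by
    rw [hadd, hadd, hΦpow, hΦneg, hΦM, hΦN]; decide)
  have hF' := hstep _ N S hS hF
  have hd := hKreck _ _ hF' (by
    rw [hbettiadd, hbettiadd, hbettipow, hbettisphere S hS, hbettiM, hbettiN]; omega)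
  exact hHomeoEquiv.trans (hDiffeoHomeo _ _ hd) (hsphereHomeo N S hS)
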